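/- Let $H'$ be a stable $k$-uniform hypergraph on $[n]$ with $n \in k\mathbb{Z}$, let $l \in [k-1]$, let $S = [n] \setminus [n-l]$ be the set of the $l$ largest vertices, and let $G$ be the $(k-l)$-uniform hypergraph on $[n-l]$ whose edges are the $(k-l)$-sets $T \subseteq [n-l]$ with $S \cup T \in E(H')$. If $G$ has a matching of size $n/k$, then $H'$ has a perfect matching. -/

import Mathlib

/-!
Take the matching `T₁, …, T_{n/k}` of the link of the top set `S`, and cut the `(n/k)·l`
uncovered vertices into `l`-sets `S₁, …, S_{n/k}`. Since `S` is an upper set of size `l`, for every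
threshold `t` it has at most as many elements `≤ t` as `Sᵢ`; hence the sorted list of `Tᵢ ∪ Sᵢ` is
dominated entrywise by that of `S ∪ Tᵢ ∈ E`, stability puts every `Tᵢ ∪ Sᵢ` in `E`, and these sets
form a perfect matching.
-/

open Finset

def IsMatchingF {α : Type*} (M : Finset (Finset α)) : Prop :=
  ∀ e ∈ M, ∀ f ∈ M, e ≠ f → Disjoint e f

def domLE {n : ℕ} (e f : Finset (Fin n)) : Prop :=
  List.Forall₂ (· ≤ ·) (e.sort (· ≤ ·)) (f.sort (· ≤ ·))

def StableF {n : ℕ} (E : Finset (Finset (Fin n))) : Prop :=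
  ∀ e f : Finset (Fin n), domLE e f → f ∈ E → e ∈ E

theorem forall₂_le_of_countP_le {α : Type*} [LinearOrder α] :
    ∀ {l₁ l₂ : List α}, l₁.Pairwise (· ≤ ·) → l₂.Pairwise (· ≤ ·) → l₁.length = l₂.length →
      (∀ t, l₂.countP (· ≤ t) ≤ l₁.countP (· ≤ t)) → List.Forall₂ (· ≤ ·) l₁ l₂
  | [], [], _, _, _, _ => .nil
  | a :: l₁, b :: l₂, h₁, h₂, hlen, hcount => by
    rw [List.pairwise_cons] at h₁ h₂
    have hab : a ≤ b := by
      have hpos : 0 < (a :: l₁).countP (· ≤ b) :=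
        (List.countP_pos_iff.mpr ⟨b, List.mem_cons_self, by simp⟩).trans_le (hcount b)
      obtain ⟨x, hx, hxb⟩ := List.countP_pos_iff.mp hpos
      rcases List.mem_cons.mp hx with rfl | hx
      · simpa using hxb
      · exact (h₁.1 x hx).trans (by simpa using hxb)
    refine .cons hab (forall₂_le_of_countP_le h₁.2 h₂.2 (by simpa using hlen) fun t => ?_)
    by_cases hbt : b ≤ t
    · have := hcount t
      simp only [List.countP_cons, hbt, hab.trans hbt, decide_true] at this
      omega
    · have : l₂.countP (· ≤ t) = 0 :=
        List.countP_eq_zero.mpr fun x hx hxt => hbt ((h₂.1 x hx).trans (by simpa using hxt))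
      omega
  | [], _ :: _, _, _, hlen, _ | _ :: _, [], _, _, hlen, _ => by simp at hlen

theorem countP_le_sort_eq_card_filter {n : ℕ} (s : Finset (Fin n)) (t : Fin n) :
    (s.sort (· ≤ ·)).countP (· ≤ t) = #(s.filter (· ≤ t)) := by
  rw [(s.sort_perm_toList (· ≤ ·)).countP_eq, ← Multiset.coe_countP, coe_toList,
    Multiset.countP_eq_card_filter]
  rfl

theorem domLE_of_card_filter_le {n : ℕ} {A B : Finset (Fin n)} (hcard : #A = #B)
    (h : ∀ t, #(B.filter (· ≤ t)) ≤ #(A.filter (· ≤ t))) : domLE A B :=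
  forall₂_le_of_countP_le (A.pairwise_sort _) (B.pairwise_sort _) (by simp [hcard])
    fun t => by simpa only [countP_le_sort_eq_card_filter] using h t

theorem card_filter_le_le_of_isUpperSet {α : Type*} [LinearOrder α] {S S' : Finset α}
    (hS : IsUpperSet (S : Set α)) (hcard : #S' = #S) (t : α) :
    #(S.filter (· ≤ t)) ≤ #(S'.filter (· ≤ t)) := by
  by_cases hlow : ∃ s ∈ S, s ≤ t
  · obtain ⟨s, hs, hst⟩ := hlow
    have habove : S'.filter (¬ · ≤ t) ⊆ S.filter (¬ · ≤ t) := fun x hx => by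
      rw [mem_filter, not_le] at hx ⊢
      exact ⟨hS (hst.trans hx.2.le) hs, hx.2⟩
    have := card_le_card habove
    have := card_filter_add_card_filter_not (s := S) (· ≤ t)
    have := card_filter_add_card_filter_not (s := S') (· ≤ t)
    omega
  · push Not at hlow
    simp [filter_eq_empty_iff.mpr fun x hx => not_le.mpr (hlow x hx)]

theorem domLE_union_of_isUpperSet {n : ℕ} {T S S' : Finset (Fin n)}
    (hS : IsUpperSet (S : Set (Fin n))) (hTS : Disjoint T S) (hTS' : Disjoint T S')
    (hcard : #S' = #S) : domLE (T ∪ S') (T ∪ S) := by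
  refine domLE_of_card_filter_le (by rw [card_union_of_disjoint hTS', card_union_of_disjoint hTS,
    hcard]) fun t => ?_
  rw [filter_union, filter_union, card_union_of_disjoint (disjoint_filter_filter hTS),
    card_union_of_disjoint (disjoint_filter_filter hTS')]
  exact Nat.add_le_add_left (card_filter_le_le_of_isUpperSet hS hcard t) _

theorem StableF.union_mem_of_isUpperSet {n : ℕ} {E : Finset (Finset (Fin n))} (hE : StableF E)
    {T S S' : Finset (Fin n)} (hS : IsUpperSet (S : Set (Fin n))) (hTS : Disjoint T S)
    (hTS' : Disjoint T S') (hcard : #S' = #S) (hST : S ∪ T ∈ E) : T ∪ S' ∈ E :=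
  hE _ _ (domLE_union_of_isUpperSet hS hTS hTS' hcard) (union_comm S T ▸ hST)

theorem IsMatchingF.mono {α : Type*} {M N : Finset (Finset α)} (hN : IsMatchingF N)
    (hMN : M ⊆ N) : IsMatchingF M :=
  fun e he f hf => hN e (hMN he) f (hMN hf)

theorem IsMatchingF.insert {α : Type*} [DecidableEq α] {M : Finset (Finset α)} {e : Finset α}
    (hM : IsMatchingF M) (he : Disjoint e (M.biUnion id)) : IsMatchingF (insert e M) := by
  have hdisj : ∀ f ∈ M, Disjoint e f := fun f hf =>
    he.mono_right (subset_biUnion_of_mem id hf)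
  intro f hf g hg hfg
  rcases mem_insert.mp hf with hfe | hf <;> rcases mem_insert.mp hg with hge | hg
  · exact absurd (hfe.trans hge.symm) hfg
  · exact hfe ▸ hdisj g hg
  · exact hge ▸ (hdisj f hf).symm
  · exact hM f hf g hg hfg

theorem exists_isMatchingF_union_of_extend {α : Type*} [DecidableEq α] {E : Finset (Finset α)}
    {l : ℕ} (M : Finset (Finset α)) (hM : IsMatchingF M) :
    ∀ R : Finset α, Disjoint (M.biUnion id) R → #R = #M * l →
      (∀ T ∈ M, ∀ S ⊆ R, #S = l → T ∪ S ∈ E) →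
      ∃ M' ⊆ E, IsMatchingF M' ∧ M'.biUnion id = M.biUnion id ∪ R := by
  induction M using Finset.induction_on with
  | empty =>
    intro R _ hR _
    rw [card_empty, zero_mul, card_eq_zero] at hR
    exact ⟨∅, empty_subset _, by simp [IsMatchingF], by simp [hR]⟩
  | @insert T M hT ih =>
    intro R hMR hR hE
    rw [biUnion_insert, id, disjoint_union_left] at hMR
    obtain ⟨S, hSR, hS⟩ := exists_subset_card_eq (s := R) (n := l)
      (by rw [hR, card_insert_of_notMem hT]; exact Nat.le_mul_of_pos_left l (Nat.succ_pos _))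
    have hTM : Disjoint T (M.biUnion id) := (disjoint_biUnion_right _ _ _).mpr fun T' hT' =>
      hM T (mem_insert_self T M) T' (mem_insert_of_mem hT') (ne_of_mem_of_not_mem hT' hT).symm
    obtain ⟨M', hM'E, hM', hcover⟩ := ih (hM.mono (subset_insert T M)) (R \ S)
      (hMR.2.mono_right sdiff_subset)
      (by rw [card_sdiff_of_subset hSR, hR, hS, card_insert_of_notMem hT, Nat.succ_mul,
        Nat.add_sub_cancel])
      fun T' hT' S' hS'R hS' => hE T' (mem_insert_of_mem hT') S' (hS'R.trans sdiff_subset) hS'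
    refine ⟨insert (T ∪ S) M', insert_subset (hE T (mem_insert_self T M) S hSR hS) hM'E,
      hM'.insert ?_, ?_⟩
    · rw [hcover, disjoint_union_left, disjoint_union_right, disjoint_union_right]
      exact ⟨⟨hTM, hMR.1.mono_right sdiff_subset⟩,
        (hMR.2.mono_right hSR).symm, disjoint_sdiff⟩
    · rw [biUnion_insert, id, hcover, biUnion_insert, id]
      ext x
      have := @hSR x
      simp only [mem_union, mem_sdiff]
      tauto

theorem stmt11_general (n k l : ℕ) (hlk : l < k) (hdvd : k ∣ n)
    (E : Finset (Finset (Fin n))) (hunif : ∀ e ∈ E, e.card = k) (hstable : StableF E)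
    -- the link hypergraph `G` of the `l` largest vertices has a matching of size `n/k`
    (hG : ∃ M ⊆ ((univ : Finset (Fin n)).powersetCard (k - l)).filter
        (fun T => (∀ i : Fin n, i ∈ T → (i : ℕ) < n - l) ∧
          (univ.filter (fun i : Fin n => n - l ≤ (i : ℕ))) ∪ T ∈ E),
        IsMatchingF M ∧ M.card = n / k) :
    ∃ M ⊆ E, IsMatchingF M ∧ M.biUnion id = univ := by
  obtain ⟨M, hMG, hM, hMcard⟩ := hG
  set S := univ.filter (fun i : Fin n => n - l ≤ (i : ℕ))
  have hlink : ∀ T ∈ M, #T = k - l ∧ Disjoint T S ∧ S ∪ T ∈ E := fun T hT => by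
    obtain ⟨hT, hlow, hST⟩ := mem_filter.mp (hMG hT)
    refine ⟨(mem_powersetCard.mp hT).2, disjoint_left.mpr fun i hiT hiS => ?_, hST⟩
    exact (mem_filter.mp hiS).2.not_gt (hlow i hiT)
  have hcovered : #(M.biUnion id) = n / k * (k - l) := by
    rw [card_biUnion (t := id) hM]
    simp only [id]
    rw [sum_const_nat fun T hT => (hlink T hT).1, hMcard]
  have hrest : #(univ \ M.biUnion id) = #M * l := by
    have hsplit : n / k * (k - l) + n / k * l = n := by
      rw [← Nat.mul_add, Nat.sub_add_cancel hlk.le, Nat.div_mul_cancel hdvd]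
    rw [card_univ_sdiff, Fintype.card_fin, hcovered, hMcard]
    omega
  have hS : IsUpperSet (S : Set (Fin n)) := fun i j hij hi => by
    simp only [S, coe_filter, mem_univ, true_and, Set.mem_ofPred_eq] at hi ⊢
    exact hi.trans hij
  obtain ⟨M', hM'E, hM', hcover⟩ := exists_isMatchingF_union_of_extend M hM _ disjoint_sdiff hrest
    fun T hT S' hS'R hS' => by
      obtain ⟨hTcard, hTS, hST⟩ := hlink T hT
      have hScard : #S = l := by
        have := hunif _ hST
        rw [card_union_of_disjoint hTS.symm, hTcard] at this
        omega
      exact hstable.union_mem_of_isUpperSet hS hTS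
        ((disjoint_sdiff.mono_left (subset_biUnion_of_mem id hT)).mono_right hS'R)
        (hS'.trans hScard.symm) hST
  exact ⟨M', hM'E, hM', by rw [hcover, union_sdiff_of_subset (subset_univ _)]⟩

theorem stmt11 (n k l : ℕ) (hk : 2 ≤ k) (hl : 0 < l) (hlk : l < k) (hdvd : k ∣ n)
    (E : Finset (Finset (Fin n))) (hunif : ∀ e ∈ E, e.card = k) (hstable : StableF E)
    -- the link hypergraph `G` of the `l` largest vertices has a matching of size `n/k`
    (hG : ∃ M ⊆ ((univ : Finset (Fin n)).powersetCard (k - l)).filter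
        (fun T => (∀ i : Fin n, i ∈ T → (i : ℕ) < n - l) ∧
          (univ.filter (fun i : Fin n => n - l ≤ (i : ℕ))) ∪ T ∈ E),
        IsMatchingF M ∧ M.card = n / k) :
    ∃ M ⊆ E, IsMatchingF M ∧ M.biUnion id = univ :=
  stmt11_general n k l hlk hdvd E hunif hstable hG
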